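/- Let B = (G, β) be a bicolored graph on a triangle with vertices a, b, c. Then applying local inversions along the string abababcac (length 9) yields B_w = (G, -β); that is, all three vertex colors are flipped and the underlying graph remains the triangle. -/

import Mathlib

open Classical

noncomputable section

/-- The local complement of a simple graph `G` at a vertex `a`: adjacency is toggled
between every pair of distinct neighbors of `a`, all other adjacencies unchanged. -/
def localComp {V : Type*} (G : SimpleGraph V) (a : V) : SimpleGraph V where
  Adj x y := (G.Adj a x ∧ G.Adj a y ∧ x ≠ y ∧ ¬ G.Adj x y) ∨
             (G.Adj x y ∧ ¬ (G.Adj a x ∧ G.Adj a y))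
  symm := by
    refine ⟨?_⟩
    intro x y h
    rcases h with ⟨hx, hy, hne, hna⟩ | ⟨h, hn⟩
    · exact Or.inl ⟨hy, hx, hne.symm, fun h' => hna h'.symm⟩
    · exact Or.inr ⟨h.symm, fun h' => hn ⟨h'.2, h'.1⟩⟩
  loopless := by
    refine ⟨?_⟩
    intro x h
    rcases h with ⟨_, _, hne, _⟩ | ⟨h, _⟩
    · exact hne rfl
    · exact G.loopless.irrefl x h

/-- A bicolored graph: a simple graph together with a `{-1,1}`-coloring (units of ℤ). -/
abbrev Bicolored (V : Type*) := SimpleGraph V × (V → ℤˣ)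

/-- Local inversion at a vertex `a`: locally complement the graph at `a` and flip
the colors of all neighbors of `a`. -/
def localInv {V : Type*} (B : Bicolored V) (a : V) : Bicolored V :=
  (localComp B.1 a, fun v => if B.1.Adj a v then - B.2 v else B.2 v)

/-- Sequential local inversion along a string (list) of vertices. -/
def invSeq {V : Type*} (B : Bicolored V) (w : List V) : Bicolored V :=
  w.foldl localInv B

/-- `flipOn B S` keeps the underlying graph and flips the colors exactly on `S`. -/
def flipOn {V : Type*} (B : Bicolored V) (S : Set V) : Bicolored V :=
  (B.1, fun v => if v ∈ S then - B.2 v else B.2 v)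

end


/-! The string splits as `aba · bab · cac`. On a complete graph, inversion at `x` turns it into
the star centred at `x`; inverting at a leaf `y` of that star changes no edge, and inverting at
`x` again restores the complete graph. The three flips are by the neighbourhoods `V ∖ {x}`,
`{x}` and `V ∖ {x}`, so the block `x y x` flips exactly the color of `x`. -/

open SimpleGraph

section LocalComplement

variable {V : Type*}

lemma localComp_top (a : V) : localComp ⊤ a = starGraph a := by
  ext x y
  simp only [localComp, top_adj, starGraph_adj]
  tauto

lemma localComp_starGraph_self (a : V) : localComp (starGraph a) a = ⊤ := by
  ext x y
  simp only [localComp, top_adj, starGraph_adj]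
  tauto

lemma localComp_starGraph_of_ne {a v : V} (h : v ≠ a) : localComp (starGraph a) v = starGraph a := by
  ext x y
  simp only [localComp, starGraph_adj]
  grind

end LocalComplement

section LocalInversion

variable {V : Type*}

lemma invSeq_append (B : Bicolored V) (u w : List V) :
    invSeq B (u ++ w) = invSeq (invSeq B u) w :=
  List.foldl_append

lemma flipOn_flipOn_of_disjoint (B : Bicolored V) {S T : Set V} (h : Disjoint S T) :
    flipOn (flipOn B S) T = flipOn B (S ∪ T) := by
  refine Prod.ext rfl (funext fun v => ?_)
  by_cases hS : v ∈ S <;> by_cases hT : v ∈ T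
  · exact absurd hT (Set.disjoint_left.mp h hS)
  all_goals simp [flipOn, hS, hT]

lemma flipOn_univ (B : Bicolored V) : flipOn B Set.univ = (B.1, fun v => -B.2 v) := by
  simp [flipOn]

lemma invSeq_pivot {x y : V} (hxy : x ≠ y) (B : Bicolored V) (hB : B.1 = ⊤) :
    invSeq B [x, y, x] = flipOn B {x} := by
  obtain ⟨G, β⟩ := B
  subst hB
  simp only [invSeq, List.foldl, localInv, flipOn, localComp_top, localComp_starGraph_of_ne hxy.symm,
    localComp_starGraph_self]
  refine Prod.ext rfl (funext fun v => ?_)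
  by_cases hv : v = x
  · subst hv
    simp [hxy.symm]
  · simp [hv, Ne.symm hv, hxy.symm]

end LocalInversion

/-- A bicolored graph on a triangle `abc` is color-reversed by the string `abababcac`. -/
theorem stmt5 {V : Type*} (B : Bicolored V) (a b c : V)
    (hab : a ≠ b) (hbc : b ≠ c) (hac : a ≠ c)
    (huniv : ∀ v : V, v = a ∨ v = b ∨ v = c) (hG : B.1 = ⊤) :
    invSeq B [a, b, a, b, a, b, c, a, c] = (B.1, fun v => - B.2 v) := by
  have hcover : {a} ∪ {b} ∪ {c} = (Set.univ : Set V) := Set.eq_univ_of_forall fun v => by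
    simp only [Set.mem_union, Set.mem_singleton_iff, or_assoc]
    exact huniv v
  have hdisj : Disjoint ({a} ∪ {b} : Set V) {c} := by simp [hac.symm, hbc.symm]
  calc invSeq B [a, b, a, b, a, b, c, a, c]
      = invSeq (invSeq (invSeq B [a, b, a]) [b, a, b]) [c, a, c] := by
        rw [← invSeq_append, ← invSeq_append]; rfl
    _ = flipOn (flipOn (flipOn B {a}) {b}) {c} := by
        rw [invSeq_pivot hab B hG, invSeq_pivot hab.symm (flipOn B {a}) hG,
          invSeq_pivot hac.symm (flipOn (flipOn B {a}) {b}) hG]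
    _ = flipOn B Set.univ := by
        rw [flipOn_flipOn_of_disjoint _ (Set.disjoint_singleton.mpr hab),
          flipOn_flipOn_of_disjoint _ hdisj, hcover]
    _ = (B.1, fun v => - B.2 v) := flipOn_univ B
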